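/- Let q = 2^r, let λ be the canonical additive character of F_q, and let β ∈ F_q*. Then: (a) Σ_{α ∈ F_q∖{0,1}} λ(β/(α² + α)) = K(λ;β) − 1; (b) if b ∈ F_q is such that the polynomial x² + x + b is irreducible over F_q (equivalently, b ∉ {α² + α : α ∈ F_q}), then Σ_{α ∈ F_q} λ(β/(α² + α + b)) = −K(λ;β) − 1. -/
import Mathlib


open scoped Classical
open Finset Matrix

noncomputable section

/-- The trace map `tr : F_q → F_2`, viewed inside `F`:
`tr(x) = x + x² + ⋯ + x^(2^(r−1))`. -/
def trF (F : Type*) [Field F] (r : ℕ) (x : F) : F :=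
  ∑ i ∈ Finset.range r, x ^ (2 ^ i)

/-- The canonical additive character `λ(x) = (−1)^(tr x)`, valued in `ℚ`. -/
def lam (F : Type*) [Field F] (r : ℕ) (x : F) : ℚ :=
  if trF F r x = 0 then 1 else -1

/-- The Kloosterman sum `K(λ;a)`. -/
def Kl (F : Type*) [Field F] [Fintype F] (r : ℕ) (a : F) : ℚ :=
  ∑ α : Fˣ, lam F r ((α : F) + a * ((α : F))⁻¹)

/-- The 2-dimensional Kloosterman sum `K₂(λ;a)`. -/
def Kl2 (F : Type*) [Field F] [Fintype F] (r : ℕ) (a : F) : ℚ :=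
  ∑ α : Fˣ, ∑ β : Fˣ, lam F r ((α : F) + (β : F) + a * ((α : F))⁻¹ * ((β : F))⁻¹)

/-- The m-dimensional Kloosterman sum `K_m(λ;a)`; `K₀(λ;a) = λ(a)`. -/
def Klm (F : Type*) [Field F] [Fintype F] (r m : ℕ) (a : F) : ℚ :=
  ∑ α : Fin m → Fˣ, lam F r ((∑ i, ((α i : F))) + a * ∏ i, ((α i : F))⁻¹)

/-- Power moments of Kloosterman sums, `MK^h`. -/
def MK (F : Type*) [Field F] [Fintype F] (r h : ℕ) : ℚ :=
  ∑ a : Fˣ, (Kl F r (a : F)) ^ h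

/-- Power moments of 2-dimensional Kloosterman sums, `MK₂^h`. -/
def MK2 (F : Type*) [Field F] [Fintype F] (r h : ℕ) : ℚ :=
  ∑ a : Fˣ, (Kl2 F r (a : F)) ^ h

/-- Stirling numbers of the second kind. -/
def stirl (h t : ℕ) : ℚ :=
  (1 / (t.factorial : ℚ)) *
    ∑ j ∈ Finset.range (t + 1), (-1 : ℚ) ^ (t - j) * (t.choose j : ℚ) * (j : ℚ) ^ h

/-- Binomial coefficient `binom(b,a)` with the convention that it is `0`
when `a < 0` or `a > b`. -/
def binomQ (b a : ℤ) : ℚ :=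
  if 0 ≤ a ∧ a ≤ b then (b.toNat.choose a.toNat : ℚ) else 0

/-- The q-binomial coefficient `[n,r]_q`. -/
def qbinom (q n r : ℕ) : ℚ :=
  ∏ j ∈ Finset.range r, ((q : ℚ) ^ (n - j) - 1) / ((q : ℚ) ^ (r - j) - 1)

/-- `A⁻(n,q)`. -/
def Aneg (q n : ℕ) : ℚ :=
  (q : ℚ) ^ ((5 * n ^ 2 - 1) / 4) * qbinom q n 1 *
    ∏ j ∈ Finset.range ((n - 1) / 2), ((q : ℚ) ^ (2 * (j + 1) - 1) - 1)

/-- `B⁻(n,q)`. -/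
def Bneg (q n : ℕ) : ℚ :=
  (q : ℚ) ^ ((n - 1) ^ 2 / 4) * ((q : ℚ) ^ n - 1) *
    ∏ j ∈ Finset.range ((n - 1) / 2), ((q : ℚ) ^ (2 * (j + 1)) - 1)

/-- `A⁺(n,q)`. -/
def Apos (q n : ℕ) : ℚ :=
  (q : ℚ) ^ ((5 * n ^ 2 - 2 * n) / 4) * qbinom q n 2 *
    ∏ j ∈ Finset.range ((n - 2) / 2), ((q : ℚ) ^ (2 * (j + 1) - 1) - 1)

/-- `B⁺(n,q)`. -/
def Bpos (q n : ℕ) : ℚ :=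
  (q : ℚ) ^ ((n - 2) ^ 2 / 4) * ((q : ℚ) ^ n - 1) * ((q : ℚ) ^ (n - 1) - 1) *
    ∏ j ∈ Finset.range ((n - 2) / 2), ((q : ℚ) ^ (2 * (j + 1)) - 1)

/-- The type of `2n × 2n` matrices over `F`. -/
abbrev Mat (F : Type*) (n : ℕ) := Matrix (Fin n ⊕ Fin n) (Fin n ⊕ Fin n) F

/-- The maximal parabolic subgroup `P(2n,q)` of `Sp(2n,q)`, as a set of matrices. -/
def Pmat (F : Type*) [Field F] (n : ℕ) : Set (Mat F n) :=
  {w | ∃ A B : Matrix (Fin n) (Fin n) F, IsUnit A ∧ Bᵀ = B ∧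
        w = Matrix.fromBlocks A 0 0 (A⁻¹)ᵀ * Matrix.fromBlocks 1 B 0 1}

/-- The element `σ_r ∈ Sp(2n,q)`. -/
def sigmaMat (F : Type*) [Field F] (n r : ℕ) : Mat F n :=
  Matrix.fromBlocks
    (Matrix.of fun i j : Fin n => if i = j ∧ r ≤ (i : ℕ) then 1 else 0)
    (Matrix.of fun i j : Fin n => if i = j ∧ (i : ℕ) < r then 1 else 0)
    (Matrix.of fun i j : Fin n => if i = j ∧ (i : ℕ) < r then 1 else 0)
    (Matrix.of fun i j : Fin n => if i = j ∧ r ≤ (i : ℕ) then 1 else 0)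

/-- The double coset `P σ_r P` in `Sp(2n,q)`. -/
def DCoset (F : Type*) [Field F] (n r : ℕ) : Set (Mat F n) :=
  {w | ∃ p ∈ Pmat F n, ∃ p' ∈ Pmat F n, w = p * sigmaMat F n r * p'}

/-- `DC⁻(n,q) = P σ_(n−1) P`. -/
def DCneg (F : Type*) [Field F] (n : ℕ) : Set (Mat F n) := DCoset F n (n - 1)

/-- `DC⁺(n,q) = P σ_(n−2) P`. -/
def DCpos (F : Type*) [Field F] (n : ℕ) : Set (Mat F n) := DCoset F n (n - 2)

/-- `N_S(β) = |{w ∈ S : Tr w = β}|`. -/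
def NDC (F : Type*) [Field F] [Fintype F] (n : ℕ) (S : Set (Mat F n)) (β : F) : ℕ :=
  (Finset.univ.filter fun w => w ∈ S ∧ Matrix.trace w = β).card

/-- Hamming weight of a binary word. -/
def wordWeight {α : Type*} [Fintype α] (u : α → ZMod 2) : ℕ :=
  (Finset.univ.filter fun x => u x = 1).card

/-- The number of codewords of Hamming weight `j` in the binary code `C(S)`
consisting of all `u ∈ F_2^S` with `∑_{w ∈ S} u(w)·Tr(w) = 0` in `F`. -/
def weightCount (F : Type*) [Field F] [Fintype F] (n : ℕ) (S : Set (Mat F n)) (j : ℕ) : ℕ :=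
  Nat.card {u : S → ZMod 2 //
    (∑ w : S, if u w = 1 then Matrix.trace (w : Mat F n) else 0) = 0 ∧ wordWeight u = j}

/-- The Kloosterman sum `K(ψ;a)` for a general (complex-valued) additive character. -/
def KlC (F : Type*) [Field F] [Fintype F] (ψ : AddChar F ℂ) (a : F) : ℂ :=
  ∑ α : Fˣ, ψ ((α : F) + a * ((α : F))⁻¹)

/-- The Kloosterman sum `K_{GL(t,q)}(ψ;a)` for the general linear group. -/
def KGL (F : Type*) [Field F] [Fintype F] (ψ : AddChar F ℂ) (t : ℕ) (a : F) : ℂ :=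
  ∑ w : Matrix.GeneralLinearGroup (Fin t) F,
    ψ (Matrix.trace (w : Matrix (Fin t) (Fin t) F) +
       a * Matrix.trace ((↑(w⁻¹) : Matrix (Fin t) (Fin t) F)))

/-- The exponential sum `∑_{w ∈ S} ψ(Tr w)` over a set of matrices. -/
def expSum (F : Type*) [Field F] [Fintype F] (n : ℕ) (S : Set (Mat F n))
    (ψ : AddChar F ℂ) : ℂ :=
  ∑ w ∈ Finset.univ.filter (fun w => w ∈ S), ψ (Matrix.trace w)

/-- The exponential sum `∑_{w ∈ S} λ(a·Tr w)` over a set of matrices. -/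
def expSumQ (F : Type*) [Field F] [Fintype F] (r n : ℕ) (S : Set (Mat F n)) (a : F) : ℚ :=
  ∑ w ∈ Finset.univ.filter (fun w => w ∈ S), lam F r (a * Matrix.trace w)

/-- `tr` as a map to `ZMod 2`. -/
def trZ (F : Type*) [Field F] (r : ℕ) (x : F) : ZMod 2 :=
  if trF F r x = 0 then 0 else 1
section AS
variable {F : Type*} [Field F] [Fintype F] {r : ℕ}

lemma ringChar_eq_two (hF : Fintype.card F = 2 ^ r) : ringChar F = 2 := by
  obtain ⟨n, hp, hc⟩ := FiniteField.card F (ringChar F)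
  have hdvd : ringChar F ∣ 2 ^ r := by rw [← hF, hc]; exact dvd_pow_self _ n.pos.ne'
  exact (Nat.prime_dvd_prime_iff_eq hp Nat.prime_two).mp (hp.dvd_of_dvd_pow hdvd)

lemma charP_two (hF : Fintype.card F = 2 ^ r) : CharP F 2 := by
  rw [← ringChar_eq_two hF]; exact ringChar.charP F

lemma trF_add (hF : Fintype.card F = 2 ^ r) (x y : F) :
    trF F r (x + y) = trF F r x + trF F r y := by
  haveI := charP_two hF
  unfold trF
  rw [← Finset.sum_add_distrib]
  exact Finset.sum_congr rfl fun i _ => add_pow_char_pow x y 2 i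

lemma trF_sq (hF : Fintype.card F = 2 ^ r) (x : F) : trF F r (x ^ 2) = trF F r x := by
  have hx : x ^ 2 ^ r = x := by
    rw [← hF]; exact FiniteField.pow_card x
  unfold trF
  have h1 : ∀ i, (x ^ 2) ^ 2 ^ i = x ^ 2 ^ (i + 1) := by
    intro i; rw [← pow_mul, pow_succ, mul_comm (2 ^ i) 2, pow_mul]
  calc ∑ i ∈ Finset.range r, (x ^ 2) ^ 2 ^ i
      = ∑ i ∈ Finset.range r, x ^ 2 ^ (i + 1) := Finset.sum_congr rfl fun i _ => h1 i
    _ = ∑ i ∈ Finset.range r, x ^ 2 ^ i := by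
        have := Finset.sum_range_succ (fun i => x ^ 2 ^ i) r
        have h2 := Finset.sum_range_succ' (fun i => x ^ 2 ^ i) r
        -- sum_range_succ' : ∑ i in range (n+1), f i = (∑ i in range n, f (i+1)) + f 0
        have key : (∑ i ∈ Finset.range r, x ^ 2 ^ (i + 1)) + x ^ 2 ^ 0 =
            (∑ i ∈ Finset.range r, x ^ 2 ^ i) + x ^ 2 ^ r := by
          rw [← h2, ← this]
        have : x ^ 2 ^ 0 = x ^ 2 ^ r := by simp [hx]
        rw [this] at key
        exact add_right_cancel key

lemma trF_square (hF : Fintype.card F = 2 ^ r) (x : F) : (trF F r x) ^ 2 = trF F r x := by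
  haveI := charP_two hF
  have : (trF F r x) ^ 2 = trF F r (x ^ 2) := by
    unfold trF
    rw [sum_pow_char]
    exact Finset.sum_congr rfl fun i _ => by
      rw [← pow_mul, ← pow_mul, mul_comm]
  rw [this, trF_sq hF]

lemma trF_mem (hF : Fintype.card F = 2 ^ r) (x : F) : trF F r x = 0 ∨ trF F r x = 1 := by
  have h := trF_square hF x
  have : trF F r x * (trF F r x - 1) = 0 := by ring_nf; linear_combination h
  rcases mul_eq_zero.mp this with h | h
  · left; exact h
  · right; exact sub_eq_zero.mp h
  

lemma trF_AS (hF : Fintype.card F = 2 ^ r) (α : F) : trF F r (α ^ 2 + α) = 0 := by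
  haveI := charP_two hF
  rw [trF_add hF, trF_sq hF, CharTwo.add_self_eq_zero]

lemma fiber_pair (hF : Fintype.card F = 2 ^ r) (α : F) :
    (Finset.univ.filter fun x : F => x ^ 2 + x = α ^ 2 + α) = {α, α + 1} := by
  haveI := charP_two hF
  have h2 : (2 : F) = 0 := CharTwo.two_eq_zero
  ext x
  simp only [Finset.mem_filter, Finset.mem_univ, true_and, Finset.mem_insert,
    Finset.mem_singleton]
  constructor
  · intro h
    have key : (x + α) * (x + α + 1) = 0 := by linear_combination h + (α^2 + α + α*x)*h2
    rcases mul_eq_zero.mp key with h' | h'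
    · left; linear_combination h' - α * h2
    · right; linear_combination h' - (α + 1) * h2
  · rintro (rfl | rfl)
    · rfl
    · linear_combination (α + 1) * h2

lemma fiber_card (hF : Fintype.card F = 2 ^ r) (α : F) :
    (Finset.univ.filter fun x : F => x ^ 2 + x = α ^ 2 + α).card = 2 := by
  haveI := charP_two hF
  rw [fiber_pair hF]
  rw [Finset.card_insert_of_notMem (by simp), Finset.card_singleton]

lemma image_card (hr : 0 < r) (hF : Fintype.card F = 2 ^ r) :
    (Finset.univ.image fun α : F => α ^ 2 + α).card = 2 ^ (r - 1) := by
  have h := Finset.card_eq_sum_card_image (fun α : F => α ^ 2 + α) Finset.univ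
  rw [Finset.card_univ, hF] at h
  have h2 : ∀ γ ∈ Finset.univ.image fun α : F => α ^ 2 + α,
      (Finset.univ.filter fun x : F => x ^ 2 + x = γ).card = 2 := by
    intro γ hγ
    obtain ⟨α, _, rfl⟩ := Finset.mem_image.mp hγ
    exact fiber_card hF α
  rw [Finset.sum_congr rfl h2, Finset.sum_const, smul_eq_mul] at h
  have : 2 ^ r = 2 ^ (r - 1) * 2 := by
    rw [← pow_succ, Nat.sub_add_cancel hr]
  omega

lemma trF_ker_card_le (hr : 0 < r) (hF : Fintype.card F = 2 ^ r) :
    (Finset.univ.filter fun x : F => trF F r x = 0).card ≤ 2 ^ (r - 1) := by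
  classical
  set P : Polynomial F := ∑ i ∈ Finset.range r, Polynomial.X ^ (2 ^ i) with hP
  have heval : ∀ x : F, P.eval x = trF F r x := by
    intro x; rw [hP]; simp [trF, Polynomial.eval_finset_sum]
  have hcoeff : P.coeff (2 ^ (r - 1)) = 1 := by
    rw [hP, Polynomial.finset_sum_coeff]
    have hc : ∀ i ∈ Finset.range r,
        (Polynomial.X ^ (2 ^ i) : Polynomial F).coeff (2 ^ (r - 1)) =
          if i = r - 1 then 1 else 0 := by
      intro i hi
      rw [Polynomial.coeff_X_pow]
      by_cases h : i = r - 1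
      · simp [h]
      · have : (2 : ℕ) ^ (r - 1) ≠ 2 ^ i := fun he =>
          h (Nat.pow_right_injective le_rfl he).symm
        simp [h, this]
    rw [Finset.sum_congr rfl hc, Finset.sum_ite_eq' (Finset.range r) (r - 1) (fun _ => (1 : F))]
    simp [Nat.sub_lt hr one_pos, hr.ne']
  have hP0 : P ≠ 0 := fun h => by simp [h] at hcoeff
  have hdeg : P.natDegree ≤ 2 ^ (r - 1) := by
    apply Polynomial.natDegree_sum_le_of_forall_le
    intro i hi
    rw [Polynomial.natDegree_X_pow]
    exact Nat.pow_le_pow_right (by norm_num) (Nat.le_sub_one_of_lt (Finset.mem_range.mp hi))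
  have hsub : (Finset.univ.filter fun x : F => trF F r x = 0) ⊆ P.roots.toFinset := by
    intro x hx
    rw [Multiset.mem_toFinset, Polynomial.mem_roots hP0]
    show P.eval x = 0
    rw [heval x]
    exact (Finset.mem_filter.mp hx).2
  calc (Finset.univ.filter fun x : F => trF F r x = 0).card
      ≤ P.roots.toFinset.card := Finset.card_le_card hsub
    _ ≤ Multiset.card P.roots := Multiset.toFinset_card_le _
    _ ≤ P.natDegree := Polynomial.card_roots' P
    _ ≤ 2 ^ (r - 1) := hdeg

lemma image_AS (hr : 0 < r) (hF : Fintype.card F = 2 ^ r) :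
    (Finset.univ.image fun α : F => α ^ 2 + α) =
      Finset.univ.filter fun γ : F => trF F r γ = 0 := by
  apply Finset.eq_of_subset_of_card_le
  · intro γ hγ
    obtain ⟨α, _, rfl⟩ := Finset.mem_image.mp hγ
    exact Finset.mem_filter.mpr ⟨Finset.mem_univ _, trF_AS hF α⟩
  · rw [image_card hr hF]
    exact trF_ker_card_le hr hF


lemma trF_zero : trF F r 0 = 0 := by
  simp [trF, zero_pow (Nat.pos_of_ne_zero (fun h => by simp at h) : (0:ℕ) < 2 ^ 0).ne']

lemma t0card (hr : 0 < r) (hF : Fintype.card F = 2 ^ r) :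
    (Finset.univ.filter fun γ : F => trF F r γ = 0).card = 2 ^ (r - 1) := by
  rw [← image_AS hr hF]; exact image_card hr hF

lemma t1card (hr : 0 < r) (hF : Fintype.card F = 2 ^ r) :
    (Finset.univ.filter fun γ : F => ¬ trF F r γ = 0).card = 2 ^ (r - 1) := by
  have h := Finset.card_filter_add_card_filter_not
    (s := (Finset.univ : Finset F)) (p := fun γ : F => trF F r γ = 0)
  rw [Finset.card_univ, hF, t0card hr hF] at h
  have h2 : (2:ℕ) ^ r = 2 ^ (r - 1) + 2 ^ (r - 1) := by
    rw [← two_mul, ← pow_succ', Nat.sub_add_cancel hr]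
  omega

lemma lam_add (hF : Fintype.card F = 2 ^ r) (x y : F) :
    lam F r (x + y) = lam F r x * lam F r y := by
  haveI := charP_two hF
  unfold lam
  rw [trF_add hF]
  rcases trF_mem hF x with hx | hx <;> rcases trF_mem hF y with hy | hy <;>
    simp [hx, hy, CharTwo.add_self_eq_zero, one_ne_zero]

lemma lam_sum (hr : 0 < r) (hF : Fintype.card F = 2 ^ r) :
    ∑ x : F, lam F r x = 0 := by
  unfold lam
  rw [Finset.sum_ite, Finset.sum_const, Finset.sum_const, t0card hr hF, t1card hr hF]
  simp

lemma units_sum (g : F → ℚ) :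
    ∑ α : Fˣ, g (α : F) = ∑ γ ∈ Finset.univ.filter (fun γ : F => γ ≠ 0), g γ := by
  have himg : (Finset.univ.image (fun α : Fˣ => (α : F))) =
      Finset.univ.filter (fun γ : F => γ ≠ 0) := by
    ext γ
    simp only [Finset.mem_image, Finset.mem_univ, true_and, Finset.mem_filter]
    exact ⟨fun ⟨u, hu⟩ => hu ▸ u.ne_zero, fun h => ⟨Units.mk0 γ h, rfl⟩⟩
  rw [← himg, Finset.sum_image (fun a _ b _ h => Units.ext h)]

end AS



/-- Theorem 13: evaluations of sums of `λ(β/(α²+α))` and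
`λ(β/(α²+α+b))` in terms of the Kloosterman sum `K(λ;β)`. -/
theorem artin_schreier_sums
    (F : Type*) [Field F] [Fintype F] (r q : ℕ) (hr : 0 < r) (hq : q = 2 ^ r)
    (hF : Fintype.card F = q) (β : F) (hβ : β ≠ 0) :
    (∑ α ∈ Finset.univ.filter (fun α : F => α ≠ 0 ∧ α ≠ 1),
        lam F r (β / (α ^ 2 + α)) = Kl F r β - 1) ∧
    (∀ b : F, (∀ α : F, α ^ 2 + α ≠ b) →
      ∑ α : F, lam F r (β / (α ^ 2 + α + b)) = -Kl F r β - 1) := by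
  subst hq
  haveI := charP_two hF
  have h2 : (2 : F) = 0 := CharTwo.two_eq_zero
  have htr1ne : ∀ γ : F, trF F r γ = 1 → γ ≠ 0 := by
    intro γ h h0
    rw [h0, trF_zero] at h
    exact one_ne_zero h.symm
  have hT1eq : (Finset.univ.filter fun a : F => a ≠ 0 ∧ ¬trF F r a = 0) =
      Finset.univ.filter (fun γ : F => trF F r γ = 1) := by
    ext γ
    simp only [Finset.mem_filter, Finset.mem_univ, true_and]
    constructor
    · rintro ⟨-, hnt⟩; exact (trF_mem hF γ).resolve_left hnt
    · intro h; exact ⟨htr1ne γ h, fun h0 => (one_ne_zero : (1:F) ≠ 0) (h0 ▸ h).symm⟩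
  have hsplitsum : ∀ f : F → ℚ,
      ∑ γ ∈ Finset.univ.filter (fun γ : F => γ ≠ 0), f γ =
      (∑ γ ∈ Finset.univ.filter (fun γ : F => γ ≠ 0 ∧ trF F r γ = 0), f γ) +
      (∑ γ ∈ Finset.univ.filter (fun γ : F => trF F r γ = 1), f γ) := by
    intro f
    rw [← Finset.sum_filter_add_sum_filter_not
      (Finset.univ.filter (fun γ : F => γ ≠ 0)) (fun γ => trF F r γ = 0) f,
      Finset.filter_filter, Finset.filter_filter, hT1eq]
  have hlam0 : lam F r (0 : F) = 1 := by simp [lam, trF_zero]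
  have hsum_ne : ∑ γ ∈ Finset.univ.filter (fun γ : F => γ ≠ 0),
      lam F r (β * γ⁻¹) = -1 := by
    have hb : ∑ γ ∈ Finset.univ.filter (fun γ : F => γ ≠ 0), lam F r (β * γ⁻¹) =
        ∑ x ∈ Finset.univ.filter (fun x : F => x ≠ 0), lam F r x := by
      apply Finset.sum_nbij' (i := fun γ : F => β * γ⁻¹) (j := fun x : F => β * x⁻¹)
      · intro a ha
        simp only [Finset.mem_filter, Finset.mem_univ, true_and] at ha ⊢
        exact mul_ne_zero hβ (inv_ne_zero ha)
      · intro a ha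
        simp only [Finset.mem_filter, Finset.mem_univ, true_and] at ha ⊢
        exact mul_ne_zero hβ (inv_ne_zero ha)
      · intro a ha
        simp only [Finset.mem_filter, Finset.mem_univ, true_and] at ha
        field_simp
      · intro a ha
        simp only [Finset.mem_filter, Finset.mem_univ, true_and] at ha
        field_simp
      · intro a ha; rfl
    rw [hb, Finset.filter_ne', Finset.sum_erase_eq_sub (Finset.mem_univ (0 : F)),
      lam_sum hr hF, hlam0]
    norm_num
  have hS01 : (∑ γ ∈ Finset.univ.filter (fun γ : F => γ ≠ 0 ∧ trF F r γ = 0),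
        lam F r (β * γ⁻¹)) +
      (∑ γ ∈ Finset.univ.filter (fun γ : F => trF F r γ = 1), lam F r (β * γ⁻¹)) = -1 :=
    (hsplitsum _).symm.trans hsum_ne
  have hKl0 : Kl F r β =
      ∑ γ ∈ Finset.univ.filter (fun γ : F => γ ≠ 0), lam F r (γ + β * γ⁻¹) := by
    unfold Kl; exact units_sum (fun γ : F => lam F r (γ + β * γ⁻¹))
  rw [hsplitsum] at hKl0
  have e0 : ∑ γ ∈ Finset.univ.filter (fun γ : F => γ ≠ 0 ∧ trF F r γ = 0),
      lam F r (γ + β * γ⁻¹) =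
      ∑ γ ∈ Finset.univ.filter (fun γ : F => γ ≠ 0 ∧ trF F r γ = 0),
      lam F r (β * γ⁻¹) := by
    refine Finset.sum_congr rfl fun γ hγ => ?_
    have h0 : trF F r γ = 0 := ((Finset.mem_filter.mp hγ).2).2
    rw [lam_add hF]
    have hl : lam F r γ = 1 := by simp [lam, h0]
    rw [hl, one_mul]
  have e1 : ∑ γ ∈ Finset.univ.filter (fun γ : F => trF F r γ = 1),
      lam F r (γ + β * γ⁻¹) =
      -∑ γ ∈ Finset.univ.filter (fun γ : F => trF F r γ = 1), lam F r (β * γ⁻¹) := by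
    rw [← Finset.sum_neg_distrib]
    refine Finset.sum_congr rfl fun γ hγ => ?_
    have h1 : trF F r γ = 1 := (Finset.mem_filter.mp hγ).2
    rw [lam_add hF]
    have hl : lam F r γ = -1 := by
      simp [lam, h1]
    rw [hl]; ring
  rw [e0, e1] at hKl0
  constructor
  · -- part (a)
    have himageA : (Finset.univ.filter (fun α : F => α ≠ 0 ∧ α ≠ 1)).image
        (fun α : F => α ^ 2 + α) =
        Finset.univ.filter (fun γ : F => γ ≠ 0 ∧ trF F r γ = 0) := by
      ext γ
      simp only [Finset.mem_image, Finset.mem_filter, Finset.mem_univ, true_and]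
      constructor
      · rintro ⟨α, ⟨hα0, hα1⟩, rfl⟩
        refine ⟨?_, trF_AS hF α⟩
        intro h0
        have hm : α * (α + 1) = 0 := by linear_combination h0
        rcases mul_eq_zero.mp hm with h | h
        · exact hα0 h
        · exact hα1 (by linear_combination h - h2)
      · rintro ⟨hne, h0⟩
        have hmem : γ ∈ Finset.univ.image (fun α : F => α ^ 2 + α) := by
          rw [image_AS hr hF]
          exact Finset.mem_filter.mpr ⟨Finset.mem_univ _, h0⟩
        obtain ⟨α, -, rfl⟩ := Finset.mem_image.mp hmem
        refine ⟨α, ⟨?_, ?_⟩, rfl⟩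
        · rintro rfl; exact hne (by ring)
        · rintro rfl; exact hne (by linear_combination h2)
    have hfp : ∀ α x : F, x ^ 2 + x = α ^ 2 + α ↔ (x = α ∨ x = α + 1) := by
      intro α x
      have := Finset.ext_iff.mp (fiber_pair hF α) x
      simpa using this
    have hfibA : ∀ γ ∈ (Finset.univ.filter (fun α : F => α ≠ 0 ∧ α ≠ 1)).image
        (fun α : F => α ^ 2 + α),
        ((Finset.univ.filter (fun α : F => α ≠ 0 ∧ α ≠ 1)).filter
          (fun α : F => α ^ 2 + α = γ)).card = 2 := by
      intro γ hγ
      obtain ⟨α, hαA, rfl⟩ := Finset.mem_image.mp hγ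
      obtain ⟨hα0, hα1⟩ := (Finset.mem_filter.mp hαA).2
      have hpair : (Finset.univ.filter (fun α : F => α ≠ 0 ∧ α ≠ 1)).filter
          (fun x : F => x ^ 2 + x = α ^ 2 + α) = {α, α + 1} := by
        ext x
        simp only [Finset.mem_filter, Finset.mem_univ, true_and, Finset.mem_insert,
          Finset.mem_singleton]
        constructor
        · rintro ⟨-, hx⟩; exact (hfp α x).mp hx
        · rintro (rfl | rfl)
          · exact ⟨⟨hα0, hα1⟩, rfl⟩
          · refine ⟨⟨?_, ?_⟩, (hfp α _).mpr (Or.inr rfl)⟩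
            · intro h; exact hα1 (by linear_combination h - h2)
            · intro h; exact hα0 (by linear_combination h)
      rw [hpair, Finset.card_insert_of_notMem, Finset.card_singleton]
      simp only [Finset.mem_singleton]
      intro h
      exact (one_ne_zero : (1:F) ≠ 0) (by linear_combination -h)
    calc ∑ α ∈ Finset.univ.filter (fun α : F => α ≠ 0 ∧ α ≠ 1),
          lam F r (β / (α ^ 2 + α))
        = ∑ α ∈ Finset.univ.filter (fun α : F => α ≠ 0 ∧ α ≠ 1),
            lam F r (β * (α ^ 2 + α)⁻¹) := by simp_rw [div_eq_mul_inv]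
      _ = ∑ b ∈ (Finset.univ.filter (fun α : F => α ≠ 0 ∧ α ≠ 1)).image
            (fun α : F => α ^ 2 + α),
            ((Finset.univ.filter (fun α : F => α ≠ 0 ∧ α ≠ 1)).filter
              (fun α : F => α ^ 2 + α = b)).card • lam F r (β * b⁻¹) :=
          Finset.sum_comp (fun γ : F => lam F r (β * γ⁻¹)) (fun α : F => α ^ 2 + α)
      _ = ∑ b ∈ (Finset.univ.filter (fun α : F => α ≠ 0 ∧ α ≠ 1)).image
            (fun α : F => α ^ 2 + α), 2 * lam F r (β * b⁻¹) := by
          refine Finset.sum_congr rfl fun b hb => ?_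
          rw [hfibA b hb]
          simp [nsmul_eq_mul]
      _ = 2 * ∑ b ∈ Finset.univ.filter (fun γ : F => γ ≠ 0 ∧ trF F r γ = 0),
            lam F r (β * b⁻¹) := by rw [himageA, ← Finset.mul_sum]
      _ = Kl F r β - 1 := by linarith [hS01, hKl0]
  · -- part (b)
    intro b hb
    have hbim : b ∉ Finset.univ.image (fun α : F => α ^ 2 + α) := by
      simp only [Finset.mem_image, Finset.mem_univ, true_and]
      rintro ⟨α, hα⟩
      exact hb α hα
    have htrb : trF F r b = 1 := by
      rcases trF_mem hF b with h | h
      · exfalso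
        apply hbim
        rw [image_AS hr hF]
        exact Finset.mem_filter.mpr ⟨Finset.mem_univ _, h⟩
      · exact h
    have hfib_eq : ∀ α : F, (Finset.univ.filter fun x : F => x ^ 2 + x + b = α ^ 2 + α + b) =
        Finset.univ.filter fun x : F => x ^ 2 + x = α ^ 2 + α := by
      intro α
      ext x
      simp only [Finset.mem_filter, Finset.mem_univ, true_and, add_left_inj]
    have himc : (Finset.univ.image (fun α : F => α ^ 2 + α + b)).card = 2 ^ (r - 1) := by
      have h := Finset.card_eq_sum_card_image (fun α : F => α ^ 2 + α + b) Finset.univ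
      rw [Finset.card_univ, hF] at h
      have h2' : ∀ γ ∈ Finset.univ.image (fun α : F => α ^ 2 + α + b),
          (Finset.univ.filter fun x : F => x ^ 2 + x + b = γ).card = 2 := by
        intro γ hγ
        obtain ⟨α, -, rfl⟩ := Finset.mem_image.mp hγ
        rw [hfib_eq α]
        exact fiber_card hF α
      rw [Finset.sum_congr rfl h2', Finset.sum_const, smul_eq_mul] at h
      have hp : (2:ℕ) ^ r = 2 ^ (r - 1) * 2 := by
        rw [← pow_succ, Nat.sub_add_cancel hr]
      omega
    have hT1' : (Finset.univ.filter fun γ : F => trF F r γ = 1) =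
        Finset.univ.filter (fun γ : F => ¬ trF F r γ = 0) := by
      ext γ
      simp only [Finset.mem_filter, Finset.mem_univ, true_and]
      constructor
      · intro h h0; exact (one_ne_zero : (1:F) ≠ 0) (h ▸ h0 : (1 : F) = 0)
      · intro h; exact (trF_mem hF γ).resolve_left h
    have himB : Finset.univ.image (fun α : F => α ^ 2 + α + b) =
        Finset.univ.filter (fun γ : F => trF F r γ = 1) := by
      apply Finset.eq_of_subset_of_card_le
      · intro γ hγ
        obtain ⟨α, -, rfl⟩ := Finset.mem_image.mp hγ
        refine Finset.mem_filter.mpr ⟨Finset.mem_univ _, ?_⟩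
        rw [trF_add hF, trF_AS hF, zero_add, htrb]
      · rw [hT1', t1card hr hF, himc]
    have hfibB : ∀ γ ∈ Finset.univ.image (fun α : F => α ^ 2 + α + b),
        ((Finset.univ : Finset F).filter (fun α : F => α ^ 2 + α + b = γ)).card = 2 := by
      intro γ hγ
      obtain ⟨α, -, rfl⟩ := Finset.mem_image.mp hγ
      rw [hfib_eq α]
      exact fiber_card hF α
    calc ∑ α : F, lam F r (β / (α ^ 2 + α + b))
        = ∑ α : F, lam F r (β * (α ^ 2 + α + b)⁻¹) := by simp_rw [div_eq_mul_inv]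
      _ = ∑ γ ∈ Finset.univ.image (fun α : F => α ^ 2 + α + b),
            ((Finset.univ : Finset F).filter (fun α : F => α ^ 2 + α + b = γ)).card •
              lam F r (β * γ⁻¹) :=
          Finset.sum_comp (fun γ : F => lam F r (β * γ⁻¹)) (fun α : F => α ^ 2 + α + b)
      _ = ∑ γ ∈ Finset.univ.image (fun α : F => α ^ 2 + α + b), 2 * lam F r (β * γ⁻¹) := by
          refine Finset.sum_congr rfl fun γ hγ => ?_
          rw [hfibB γ hγ]
          simp [nsmul_eq_mul]
      _ = 2 * ∑ γ ∈ Finset.univ.filter (fun γ : F => trF F r γ = 1),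
            lam F r (β * γ⁻¹) := by rw [himB, ← Finset.mul_sum]
      _ = -Kl F r β - 1 := by linarith [hS01, hKl0]
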